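/- Let T > 0 and β ≥ 1. Then lim_{t↑T} (T-t)^β · ∫₀ᵗ exp(∓(2/β)(T-s)^β)/(T-s)² ds = (1/β)·lim_{t↑T}(T-t)^{β-1}, which equals 1 if β = 1 and 0 if β > 1. For 0 < β < 1 this limit does not exist (is infinite). -/

import Mathlib

/-!
With `u = T - t` and `v = T - s` the quantity is `u ^ (β - 1) * (u * ∫ v in u..T, g v / v ^ 2)`,
where `g v = exp (±(2/β) v^β) → 1` as `v → 0⁺`. Since `∫ v in u..T, 1 / v ^ 2 = 1/u - 1/T`, the
factor `u * ∫ v in u..T, g v / v ^ 2` tends to `1`: near `0` the error `g - 1` is uniformly small,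
and the integral over the rest of `[u, T]` is a fixed number killed by the factor `u`. The three
cases are then the behaviour of `u ^ (β - 1)` at `0⁺`.
-/

open Real Filter intervalIntegral

open Set Topology

lemma integral_inv_sq {a b : ℝ} (ha : 0 < a) (hb : 0 < b) :
    ∫ v in a..b, (v ^ 2)⁻¹ = a⁻¹ - b⁻¹ := by
  have h0 : (0 : ℝ) ∉ uIcc a b := fun h => (lt_min ha hb).not_ge h.1
  have := integral_zpow (n := -2) (Or.inr ⟨by norm_num, h0⟩)
  norm_num at this
  rw [this]
  ring

lemma intervalIntegrable_div_sq {g : ℝ → ℝ} {T a b : ℝ} (hg : ContinuousOn g (Ioc 0 T))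
    (ha : a ∈ Ioc 0 T) (hb : b ∈ Ioc 0 T) :
    IntervalIntegrable (fun v => g v / v ^ 2) MeasureTheory.volume a b := by
  have hsub : uIcc a b ⊆ Ioc 0 T := fun v hv =>
    ⟨(lt_min ha.1 hb.1).trans_le hv.1, hv.2.trans (max_le ha.2 hb.2)⟩
  exact ((hg.mono hsub).div (continuousOn_pow 2) fun v hv =>
    pow_ne_zero 2 (hsub hv).1.ne').intervalIntegrable

lemma integral_const_div_sq (C : ℝ) {a b : ℝ} (ha : 0 < a) (hb : 0 < b) :
    ∫ v in a..b, C / v ^ 2 = C * (a⁻¹ - b⁻¹) := by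
  simp_rw [div_eq_mul_inv]
  rw [integral_const_mul, integral_inv_sq ha hb]

lemma abs_integral_div_sq_le {h : ℝ → ℝ} {a b C : ℝ} (ha : 0 < a) (hab : a ≤ b)
    (hh : ∀ v ∈ Ioc a b, |h v| ≤ C) :
    |∫ v in a..b, h v / v ^ 2| ≤ C * (a⁻¹ - b⁻¹) := by
  rw [← integral_const_div_sq C ha (ha.trans_le hab), ← Real.norm_eq_abs]
  refine norm_integral_le_of_norm_le hab (Eventually.of_forall fun v hv => ?_)
    (intervalIntegrable_div_sq continuousOn_const ⟨ha, hab⟩ ⟨ha.trans_le hab, le_rfl⟩)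
  rw [norm_div, norm_pow, Real.norm_eq_abs, Real.norm_eq_abs, abs_of_pos (ha.trans hv.1)]
  exact div_le_div_of_nonneg_right (hh v hv) (by positivity)

lemma tendsto_mul_integral_div_sq_of_tendsto_zero {h : ℝ → ℝ} {T : ℝ} (hT : 0 < T)
    (hcont : ContinuousOn h (Ioc 0 T)) (h0 : Tendsto h (𝓝[>] 0) (𝓝 0)) :
    Tendsto (fun u => u * ∫ v in u..T, h v / v ^ 2) (𝓝[>] 0) (𝓝 0) := by
  rw [Metric.tendsto_nhds]
  intro ε hε
  obtain ⟨δ', hδ', hsmall'⟩ := mem_nhdsGT_iff_exists_Ioc_subset.1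
    (h0 (Metric.closedBall_mem_nhds 0 (half_pos hε)))
  set δ := min δ' T
  have hδ : 0 < δ := lt_min hδ' hT
  have hsmall : ∀ v ∈ Ioc 0 δ, |h v| ≤ ε / 2 := fun v hv => by
    simpa using hsmall' ⟨hv.1, hv.2.trans (min_le_left _ _)⟩
  set K := |∫ v in δ..T, h v / v ^ 2|
  have hK : ∀ᶠ u in 𝓝[>] 0, u * K < ε / 2 := by
    have : Tendsto (fun u => u * K) (𝓝[>] 0) (𝓝 0) := by
      simpa using ((continuous_mul_const K).tendsto 0).mono_left nhdsWithin_le_nhds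
    exact this.eventually (gt_mem_nhds (half_pos hε))
  filter_upwards [hK, Ioo_mem_nhdsGT hδ] with u huK ⟨hu0, huδ⟩
  have hδT : δ ≤ T := min_le_right _ _
  rw [← integral_add_adjacent_intervals
      (intervalIntegrable_div_sq hcont ⟨hu0, by linarith⟩ ⟨hδ, hδT⟩)
      (intervalIntegrable_div_sq hcont ⟨hδ, hδT⟩ ⟨hT, le_rfl⟩),
    Real.dist_eq, sub_zero, abs_mul, abs_of_pos hu0]
  have hnear := abs_integral_div_sq_le hu0 huδ.le fun v hv => hsmall v ⟨hu0.trans hv.1, hv.2⟩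
  have hscaled : u * (ε / 2 * (u⁻¹ - δ⁻¹)) ≤ ε / 2 := by
    have : u * (ε / 2 * (u⁻¹ - δ⁻¹)) = ε / 2 - u * (ε / 2) / δ := by field_simp
    rw [this]
    linarith [show 0 ≤ u * (ε / 2) / δ by positivity]
  calc u * |(∫ v in u..δ, h v / v ^ 2) + ∫ v in δ..T, h v / v ^ 2|
      ≤ u * (ε / 2 * (u⁻¹ - δ⁻¹) + K) := by
        gcongr
        exact (abs_add_le _ _).trans (by gcongr)
    _ < ε := by linarith [mul_add u (ε / 2 * (u⁻¹ - δ⁻¹)) K]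

theorem tendsto_mul_integral_div_sq {g : ℝ → ℝ} {T L : ℝ} (hT : 0 < T)
    (hcont : ContinuousOn g (Ioc 0 T)) (hg : Tendsto g (𝓝[>] 0) (𝓝 L)) :
    Tendsto (fun u => u * ∫ v in u..T, g v / v ^ 2) (𝓝[>] 0) (𝓝 L) := by
  have hmain : Tendsto (fun u => L * (1 - u / T)) (𝓝[>] 0) (𝓝 L) := by
    have : Continuous fun u : ℝ => L * (1 - u / T) := by fun_prop
    simpa using (this.tendsto 0).mono_left nhdsWithin_le_nhds
  have herr := tendsto_mul_integral_div_sq_of_tendsto_zero (h := fun v => g v - L) hT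
    (hcont.sub continuousOn_const) (by simpa using hg.sub_const L)
  refine (by simpa using hmain.add herr : Tendsto _ _ (𝓝 L)).congr' ?_
  filter_upwards [Ioo_mem_nhdsGT hT] with u ⟨hu0, huT⟩
  have hu : u ∈ Ioc 0 T := ⟨hu0, huT.le⟩
  have hsplit : ∫ v in u..T, g v / v ^ 2
      = (∫ v in u..T, L / v ^ 2) + ∫ v in u..T, (g v - L) / v ^ 2 := by
    rw [← integral_add (intervalIntegrable_div_sq continuousOn_const hu ⟨hT, le_rfl⟩)
      (intervalIntegrable_div_sq (g := fun v => g v - L) (hcont.sub continuousOn_const) hu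
        ⟨hT, le_rfl⟩)]
    congr 1 with v
    ring
  rw [hsplit, integral_const_div_sq L hu0 hT]
  field_simp

lemma tendsto_sub_nhdsLT_nhdsGT_zero (T : ℝ) :
    Tendsto (fun t => T - t) (𝓝[<] T) (𝓝[>] 0) :=
  tendsto_nhdsWithin_of_tendsto_nhds_of_eventually_within _
    ((continuous_sub_left T).tendsto' T 0 (sub_self T) |>.mono_left nhdsWithin_le_nhds)
    (eventually_nhdsWithin_of_forall fun _ ht => mem_Ioi.2 (sub_pos.2 ht))

lemma rpow_mul_integral_comp_sub {g : ℝ → ℝ} {T t : ℝ} (β : ℝ) (ht : t < T) :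
    (T - t) ^ β * ∫ s in (0 : ℝ)..t, g (T - s) / (T - s) ^ 2
      = (T - t) ^ (β - 1) * ((T - t) * ∫ v in T - t..T, g v / v ^ 2) := by
  have := integral_comp_sub_left (fun v => g v / v ^ 2) T (a := 0) (b := t)
  simp only [sub_zero] at this
  rw [this, ← mul_assoc, ← rpow_add_one (sub_pos.2 ht).ne', sub_add_cancel]

theorem stmt_17_general (T : ℝ) (hT : 0 < T) (β : ℝ) (hβ : 0 < β)
    (ε : ℝ) :
    (β = 1 →
      Tendsto (fun t => (T - t) ^ β
          * ∫ s in (0:ℝ)..t, Real.exp (ε * (2 / β) * (T - s) ^ β) / (T - s) ^ 2)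
        (nhdsWithin T (Set.Iio T)) (nhds 1)) ∧
    (1 < β →
      Tendsto (fun t => (T - t) ^ β
          * ∫ s in (0:ℝ)..t, Real.exp (ε * (2 / β) * (T - s) ^ β) / (T - s) ^ 2)
        (nhdsWithin T (Set.Iio T)) (nhds 0)) ∧
    (β < 1 →
      Tendsto (fun t => (T - t) ^ β
          * ∫ s in (0:ℝ)..t, Real.exp (ε * (2 / β) * (T - s) ^ β) / (T - s) ^ 2)
        (nhdsWithin T (Set.Iio T)) atTop) := by
  set g : ℝ → ℝ := fun v => exp (ε * (2 / β) * v ^ β)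
  have hg : Continuous g := continuous_exp.comp ((continuous_rpow_const hβ.le).const_mul _)
  have hg0 : Tendsto g (𝓝[>] 0) (𝓝 1) := by
    simpa [g, zero_rpow hβ.ne'] using (hg.tendsto 0).mono_left nhdsWithin_le_nhds
  have hu := tendsto_sub_nhdsLT_nhdsGT_zero T
  have hkey : Tendsto (fun t => (T - t) * ∫ v in T - t..T, g v / v ^ 2) (𝓝[<] T) (𝓝 1) :=
    (tendsto_mul_integral_div_sq hT hg.continuousOn hg0).comp hu
  have hfactor := eventually_nhdsWithin_of_forall (a := T) fun t (ht : t ∈ Iio T) =>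
    (rpow_mul_integral_comp_sub (g := g) β ht).symm
  refine ⟨fun h1 => ?_, fun h1 => ?_, fun h1 => ?_⟩ <;> refine Tendsto.congr' hfactor ?_
  · simpa [h1] using hkey
  · have hpow : Tendsto (fun u : ℝ => u ^ (β - 1)) (𝓝[>] 0) (𝓝 0) :=
      ((continuous_rpow_const (by linarith)).tendsto' 0 0 (zero_rpow (by linarith))).mono_left
        nhdsWithin_le_nhds
    simpa using (hpow.comp hu).mul hkey
  · exact ((tendsto_rpow_neg_nhdsGT_zero (by linarith)).comp hu).atTop_mul_pos one_pos hkey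

theorem stmt_17 (T : ℝ) (hT : 0 < T) (β : ℝ) (hβ : 0 < β)
    (ε : ℝ) (hε : ε = 1 ∨ ε = -1) :
    (β = 1 →
      Tendsto (fun t => (T - t) ^ β
          * ∫ s in (0:ℝ)..t, Real.exp (ε * (2 / β) * (T - s) ^ β) / (T - s) ^ 2)
        (nhdsWithin T (Set.Iio T)) (nhds 1)) ∧
    (1 < β →
      Tendsto (fun t => (T - t) ^ β
          * ∫ s in (0:ℝ)..t, Real.exp (ε * (2 / β) * (T - s) ^ β) / (T - s) ^ 2)
        (nhdsWithin T (Set.Iio T)) (nhds 0)) ∧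
    (β < 1 →
      Tendsto (fun t => (T - t) ^ β
          * ∫ s in (0:ℝ)..t, Real.exp (ε * (2 / β) * (T - s) ^ β) / (T - s) ^ 2)
        (nhdsWithin T (Set.Iio T)) atTop) :=
  stmt_17_general T hT β hβ ε
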